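/- For every element v of the alternating group A_{n+1}, there exist unique elements v_j in R_j^A for 1 <= j <= n-1 such that v = v_1 v_2 ... v_{n-1}. -/

import Mathlib

open Equiv Finset

namespace SignedEven

/-- Type-B Coxeter generators inside `Equiv.Perm ℤ`:
`s 0` is the sign change in the first position, `s i = (i, i+1)(-i, -(i+1))`. -/
def s (i : ℕ) : Equiv.Perm ℤ :=
  if i = 0 then Equiv.swap 1 (-1)
  else Equiv.swap (i : ℤ) ((i : ℤ) + 1) * Equiv.swap (-(i : ℤ)) (-((i : ℤ) + 1))

/-- Generators of the group of signed even permutations: `a 0 = s 0`, `a i = s 1 * s (i+1)`. -/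
def a (i : ℕ) : Equiv.Perm ℤ := if i = 0 then s 0 else s 1 * s (i + 1)

/-- `σ` is a signed permutation on `{±1, …, ±n}` (an element of `B_n`). -/
def isB (n : ℕ) (σ : Equiv.Perm ℤ) : Prop :=
  (∀ i : ℤ, σ (-i) = -σ i) ∧ ∀ i : ℤ, (n : ℤ) < |i| → σ i = i

/-- `σ` is an (unsigned) permutation of `{1, …, n}` (an element of `S_n ⊆ B_n`). -/
def isS (n : ℕ) (σ : Equiv.Perm ℤ) : Prop := isB n σ ∧ ∀ i : ℤ, 0 < i → 0 < σ i

/-- inversion number of the window `[σ(1), …, σ(n)]`. -/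
noncomputable def invStat (n : ℕ) (σ : Equiv.Perm ℤ) : ℕ :=
  (((Finset.Icc (1 : ℤ) (n : ℤ)) ×ˢ (Finset.Icc (1 : ℤ) (n : ℤ))).filter
    (fun p => p.1 < p.2 ∧ σ p.2 < σ p.1)).card

/-- inversion number of the window of `|σ|`; its parity is the sign of `Abs σ`. -/
noncomputable def invAbs (n : ℕ) (σ : Equiv.Perm ℤ) : ℕ :=
  (((Finset.Icc (1 : ℤ) (n : ℤ)) ×ˢ (Finset.Icc (1 : ℤ) (n : ℤ))).filter
    (fun p => p.1 < p.2 ∧ |σ p.2| < |σ p.1|)).card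

/-- `σ ∈ L_n = C₂ ≀ A_n`: a signed permutation whose underlying permutation is even. -/
def isL (n : ℕ) (σ : Equiv.Perm ℤ) : Prop := isB n σ ∧ Even (invAbs n σ)

/-- `σ ∈ A_n`: an unsigned even permutation. -/
def isA (n : ℕ) (σ : Equiv.Perm ℤ) : Prop := isS n σ ∧ Even (invStat n σ)

/-- `Neg(σ) = {i ∈ [n] : σ(i) < 0}`. -/
noncomputable def negSet (n : ℕ) (σ : Equiv.Perm ℤ) : Finset ℤ :=
  (Finset.Icc (1 : ℤ) (n : ℤ)).filter (fun i => σ i < 0)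

/-- `σ ∈ D_n`: a signed permutation with an even number of negative window entries. -/
def isD (n : ℕ) (σ : Equiv.Perm ℤ) : Prop := isB n σ ∧ Even (negSet n σ).card

/-- the sum of the elements of `Neg(σ)`. -/
noncomputable def negSum (n : ℕ) (σ : Equiv.Perm ℤ) : ℤ := ∑ i ∈ negSet n σ, i

/-- `del_B(σ)`: the number of non-initial left-to-right minima of the window. -/
noncomputable def delB (n : ℕ) (σ : Equiv.Perm ℤ) : ℕ :=
  ((Finset.Icc (2 : ℤ) (n : ℤ)).filter
    (fun j => ∀ i ∈ Finset.Icc (1 : ℤ) (n : ℤ), i < j → σ j < σ i)).card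

/-- the Coxeter length of `σ ∈ B_n` with respect to `s 0, …, s (n-1)`. -/
noncomputable def ellB (n : ℕ) (σ : Equiv.Perm ℤ) : ℕ :=
  sInf {k | ∃ l : List ℕ, l.length = k ∧ (∀ i ∈ l, i < n) ∧ (l.map s).prod = σ}

/-- the `L`-length `ℓ_L(σ) = inv(σ) - del_B(σ) + Σ Neg(σ⁻¹)`. -/
noncomputable def ellL (n : ℕ) (σ : Equiv.Perm ℤ) : ℤ :=
  (invStat n σ : ℤ) - (delB n σ : ℤ) + negSum n σ⁻¹

/-- the `A`-descent set of `π ∈ L_{n+1}`. -/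
noncomputable def desASet (n : ℕ) (π : Equiv.Perm ℤ) : Finset ℕ :=
  (Finset.Icc 1 (n - 1)).filter (fun i => ellL (n + 1) (π * a i) ≤ ellL (n + 1) π)

/-- the `A`-descent number of `π ∈ L_{n+1}`. -/
noncomputable def desA (n : ℕ) (π : Equiv.Perm ℤ) : ℕ := (desASet n π).card

/-- the `S`-descent set of `σ ∈ B_n`. -/
def desSSet (n : ℕ) (σ : Equiv.Perm ℤ) : Finset ℕ :=
  (Finset.Icc 1 (n - 1)).filter (fun i => σ ((i : ℤ) + 1) < σ (i : ℤ))

/-- `maj_B(σ)`. -/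
def majB (n : ℕ) (σ : Equiv.Perm ℤ) : ℕ := ∑ i ∈ desSSet n σ, i

/-- `rmaj_{B_n}(σ)`. -/
def rmajB (n : ℕ) (σ : Equiv.Perm ℤ) : ℕ := ∑ i ∈ desSSet n σ, (n - i)

/-- `rmaj_{L_{n+1}}(π)`. -/
noncomputable def rmajL (n : ℕ) (π : Equiv.Perm ℤ) : ℕ := ∑ i ∈ desASet n π, (n - i)

/-- `nrmaj_{L_{n+1}}(π) = rmaj_{L_{n+1}}(π) + Σ Neg(π⁻¹)`. -/
noncomputable def nrmajL (n : ℕ) (π : Equiv.Perm ℤ) : ℤ := (rmajL n π : ℤ) + negSum (n + 1) π⁻¹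

/-- `s_j s_{j-1} ⋯ s_{j-k+1}` (k factors). -/
def rS (j k : ℕ) : Equiv.Perm ℤ := ((List.range k).map (fun t => s (j - t))).prod

/-- `R_j^S = {1, s_j, s_j s_{j-1}, …, s_j ⋯ s_1}`. -/
def RS (j : ℕ) : Set (Equiv.Perm ℤ) := {σ | ∃ k ≤ j, σ = rS j k}

/-- the word `s_j s_{j-1} ⋯` of length `k` running down to `s_0` and possibly back up. -/
def wordB (j k : ℕ) : List ℕ :=
  ((List.range (min k (j + 1))).map (fun t => j - t)) ++
    ((List.range (k - (j + 1))).map (fun t => t + 1))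

/-- the `k`-th element of `R_j^B`. -/
def rB (j k : ℕ) : Equiv.Perm ℤ := ((wordB j k).map s).prod

/-- `R_j^B = {1, s_j, …, s_j ⋯ s_1, s_j ⋯ s_1 s_0, s_j ⋯ s_1 s_0 s_1, …, s_j ⋯ s_1 s_0 s_1 ⋯ s_j}`. -/
def RB (j : ℕ) : Set (Equiv.Perm ℤ) := {σ | ∃ k ≤ 2 * j + 1, σ = rB j k}

/-- the `k`-th element of `R_j^A`: `a_j ⋯ a_{j-k+1}` for `k ≤ j`, and `a_j ⋯ a_2 a_1⁻¹` for `k = j+1`. -/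
def rA (j k : ℕ) : Equiv.Perm ℤ :=
  if k ≤ j then ((List.range k).map (fun t => a (j - t))).prod
  else ((List.range (j - 1)).map (fun t => a (j - t))).prod * (a 1)⁻¹

/-- `R_j^A = {1, a_j, a_j a_{j-1}, …, a_j ⋯ a_2 a_1, a_j ⋯ a_2 a_1⁻¹}`. -/
def RA (j : ℕ) : Set (Equiv.Perm ℤ) := {σ | ∃ k ≤ j + 1, σ = rA j k}

/-- `R_j^L`. -/
def RL (j : ℕ) : Set (Equiv.Perm ℤ) :=
  if j = 0 then {1, a 0, a 1 * a 0 * (a 1)⁻¹, a 0 * a 1 * a 0 * (a 1)⁻¹}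
  else RA j ∪ {σ | σ = rA j (j + 1) * a 0 ∨ σ = rA j (j + 1) * a 0 * (a 1)⁻¹ ∨
    ∃ m, 1 ≤ m ∧ m ≤ j ∧
      σ = rA j (j + 1) * a 0 * ((List.range m).map (fun t => a (t + 1))).prod}


/-!
The parity of the inversion number of the window `[σ(1), …, σ(n)]` is the sign of the induced
permutation of `Fin n`, so `A_n` is a subgroup: the kernel of that sign on `S_n`.

Each `a_i = s_1 s_{i+1}` is a product of two transpositions, hence lies in `A_{j+2}` for `i ≤ j`, and
the `k`-th element of `R_j^A` sends the position `j + 2 - k` to `j + 2`. Since `A_{j+1}` is the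
stabiliser of `j + 2` in `A_{j+2}`, the right coset `A_{j+1} v` is determined by `v⁻¹ (j + 2)`,
and `R_j^A` contains exactly one element of each coset. Peeling off the last factor gives the
unique presentation by induction on `j`, starting from `A_2 = 1`.
-/

section AlternatingGroup

variable {n : ℕ} {σ τ : Perm ℤ}

lemma isS.map_zero (hσ : isS n σ) : σ 0 = 0 := by
  have := hσ.1.1 0
  rw [neg_zero] at this
  omega

lemma isS.apply_of_lt (hσ : isS n σ) {x : ℤ} (hx : (n : ℤ) < x) : σ x = x :=
  hσ.1.2 x (lt_abs.2 (Or.inl hx))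

lemma isS.apply_mem_Icc_iff (hσ : isS n σ) (x : ℤ) :
    σ x ∈ Set.Icc (1 : ℤ) n ↔ x ∈ Set.Icc (1 : ℤ) n := by
  simp only [Set.mem_Icc]
  constructor
  · rintro ⟨h1, h2⟩
    rcases lt_trichotomy x 0 with hx | rfl | hx
    · have := hσ.2 (-x) (by omega)
      rw [hσ.1.1] at this
      omega
    · rw [hσ.map_zero] at h1
      omega
    · refine ⟨hx, not_lt.1 fun hn => ?_⟩
      rw [hσ.apply_of_lt hn] at h2
      omega
  · rintro ⟨h1, h2⟩
    refine ⟨hσ.2 x (by omega), not_lt.1 fun hn => ?_⟩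
    have hfix := hσ.apply_of_lt hn
    rw [σ.injective hfix] at hn
    omega

lemma isS_one : isS n 1 :=
  ⟨⟨fun _ => rfl, fun _ _ => rfl⟩, fun _ h => h⟩

lemma isS.mul (hσ : isS n σ) (hτ : isS n τ) : isS n (σ * τ) := by
  refine ⟨⟨fun i => ?_, fun i hi => ?_⟩, fun i hi => hσ.2 _ (hτ.2 i hi)⟩
  · simp only [Perm.mul_apply, hτ.1.1, hσ.1.1]
  · simp only [Perm.mul_apply, hτ.1.2 i hi, hσ.1.2 i hi]

lemma isS.inv (hσ : isS n σ) : isS n σ⁻¹ := by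
  have hneg : ∀ i, σ⁻¹ (-i) = -σ⁻¹ i := fun i =>
    Perm.inv_eq_iff_eq.2 (by rw [hσ.1.1]; simp)
  refine ⟨⟨hneg, fun i hi => ?_⟩, fun i hi => ?_⟩
  · rw [Perm.inv_eq_iff_eq, hσ.1.2 i hi]
  · by_contra! hle
    rcases hle.lt_or_eq with hlt | h0
    · have := hσ.2 _ (neg_pos.2 hlt)
      simp only [hσ.1.1, Perm.coe_inv, apply_symm_apply] at this
      omega
    · have := congrArg σ h0
      simp only [Perm.coe_inv, apply_symm_apply, hσ.map_zero] at this
      omega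

def symSubgroup (n : ℕ) : Subgroup (Perm ℤ) where
  carrier := {σ | isS n σ}
  one_mem' := isS_one
  mul_mem' := isS.mul
  inv_mem' := isS.inv

def windowEquiv (n : ℕ) : Fin n ≃ Set.Icc (1 : ℤ) n where
  toFun i := ⟨i + 1, by have := i.isLt; constructor <;> omega⟩
  invFun x := ⟨(x.1 - 1).toNat, by obtain ⟨_, _⟩ := x.2; omega⟩
  left_inv i := by ext; simp
  right_inv x := by obtain ⟨_, ⟨_, _⟩⟩ := x; ext; simp only; omega

def window (n : ℕ) : symSubgroup n →* Perm (Fin n) where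
  toFun σ := (windowEquiv n).symm.permCongr (σ.1.subtypePerm σ.2.apply_mem_Icc_iff)
  map_one' := by ext; simp
  map_mul' σ τ := by ext; simp

lemma window_apply (σ : symSubgroup n) (i : Fin n) :
    ((window n σ i : ℕ) : ℤ) + 1 = σ.1 (i + 1) := by
  have := i.isLt
  obtain ⟨h1, -⟩ := (σ.2.apply_mem_Icc_iff (i + 1)).2 ⟨by omega, by omega⟩
  simp only [window, windowEquiv, Int.pred_toNat, symm_mk, MonoidHom.coe_mk, OneHom.coe_mk,
    permCongr_apply, coe_fn_mk, Perm.subtypePerm_apply]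
  omega

lemma window_lt_window_iff (σ : symSubgroup n) (i j : Fin n) :
    window n σ i < window n σ j ↔ σ.1 (i + 1) < σ.1 (j + 1) := by
  rw [Fin.lt_def, ← window_apply, ← window_apply]
  omega

lemma prod_sign_eq_neg_one_pow_invStat (σ : Perm ℤ) :
    ∏ p ∈ (Finset.Icc (1 : ℤ) n ×ˢ Finset.Icc (1 : ℤ) n).filter (fun p => p.1 < p.2),
      (if σ p.1 < σ p.2 then 1 else -1 : ℤˣ) = (-1) ^ invStat n σ := by
  rw [invStat, ← Finset.filter_filter, Finset.prod_ite, Finset.prod_const_one, one_mul,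
    Finset.prod_const, Finset.filter_filter, Finset.filter_filter]
  congr 2
  refine Finset.filter_congr fun p _ => and_congr_right fun hlt => ?_
  rw [not_lt]
  exact (σ.injective.ne hlt.ne').le_iff_lt

lemma sign_window (σ : symSubgroup n) : Perm.sign (window n σ) = (-1) ^ invStat n σ := by
  rw [Perm.sign_eq_prod_prod_Iio, Finset.prod_sigma', ← prod_sign_eq_neg_one_pow_invStat]
  refine Finset.prod_bij (fun x _ => ((x.2 : ℤ) + 1, (x.1 : ℤ) + 1)) ?_ ?_ ?_ ?_
  · rintro ⟨j, i⟩ hx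
    have := i.isLt
    have := j.isLt
    have hij : i < j := by simpa using hx
    simp only [Finset.mem_filter, Finset.mem_product, Finset.mem_Icc]
    omega
  · rintro ⟨j, i⟩ - ⟨j', i'⟩ - h
    simp only [Prod.mk.injEq, add_left_inj, Nat.cast_inj] at h
    rw [Fin.val_inj.1 h.1, Fin.val_inj.1 h.2]
  · rintro ⟨x, y⟩ hp
    simp only [Finset.mem_filter, Finset.mem_product, Finset.mem_Icc] at hp
    refine ⟨⟨⟨(y - 1).toNat, by omega⟩, ⟨(x - 1).toNat, by omega⟩⟩, ?_, ?_⟩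
    · simp only [Finset.mem_sigma, Finset.mem_univ, Finset.mem_Iio, Fin.mk_lt_mk, true_and]
      omega
    · simp only [Prod.mk.injEq]
      omega
  · rintro ⟨j, i⟩ -
    simp only [window_lt_window_iff]

def altSubgroup (n : ℕ) : Subgroup (Perm ℤ) :=
  (Perm.sign.comp (window n)).ker.map (symSubgroup n).subtype

lemma mem_altSubgroup : σ ∈ altSubgroup n ↔ isA n σ := by
  have key (τ : symSubgroup n) : Perm.sign (window n τ) = 1 ↔ Even (invStat n τ) := by
    rw [sign_window, neg_one_pow_eq_one_iff_even (by decide)]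
  simp only [altSubgroup, Subgroup.mem_map, MonoidHom.mem_ker, MonoidHom.comp_apply,
    Subgroup.coe_subtype]
  constructor
  · rintro ⟨τ, hτ, rfl⟩
    exact ⟨τ.2, (key τ).1 hτ⟩
  · intro h
    exact ⟨⟨σ, h.1⟩, (key _).2 h.2, rfl⟩

lemma isS.eq_one (hσ : isS n σ) (h : ∀ x : ℤ, 1 ≤ x → x ≤ n → σ x = x) : σ = 1 := by
  have hpos : ∀ x : ℤ, 0 < x → σ x = x := fun x hx =>
    (le_or_gt x n).elim (h x hx) hσ.apply_of_lt
  ext x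
  rcases lt_trichotomy x 0 with hx | rfl | hx
  · have := hσ.1.1 (-x)
    rw [neg_neg, hpos (-x) (by omega)] at this
    simp only [Perm.one_apply]
    omega
  · exact hσ.map_zero
  · exact hpos x hx

lemma altSubgroup_two : altSubgroup 2 = ⊥ := by
  refine (Subgroup.eq_bot_iff_forall _).2 fun σ hσ => ?_
  obtain ⟨τ, hτ, rfl⟩ := Subgroup.mem_map.1 hσ
  have hw : window 2 τ = 1 := (by decide : ∀ π : Perm (Fin 2), Perm.sign π = 1 → π = 1) _ hτ
  refine τ.2.eq_one fun x h1 h2 => ?_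
  have := window_apply τ ⟨(x - 1).toNat, by omega⟩
  rw [hw, Perm.one_apply, show (((x - 1).toNat : ℕ) : ℤ) + 1 = x by omega] at this
  exact this.symm

lemma isS.mono {N : ℕ} (hσ : isS n σ) (h : n ≤ N) : isS N σ :=
  ⟨⟨hσ.1.1, fun x hx => hσ.1.2 x (by omega)⟩, hσ.2⟩

lemma isS.of_apply_succ (hσ : isS (n + 1) σ) (h : σ (n + 1) = n + 1) : isS n σ := by
  refine ⟨⟨hσ.1.1, fun x hx => ?_⟩, hσ.2⟩
  rcases lt_abs.1 hx with hx | hx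
  · rcases (by omega : x = n + 1 ∨ ((n + 1 : ℕ) : ℤ) < x) with rfl | hx
    · exact h
    · exact hσ.apply_of_lt hx
  · rcases (by omega : x = -(n + 1) ∨ ((n + 1 : ℕ) : ℤ) < -x) with rfl | hx
    · rw [hσ.1.1, h]
    · exact hσ.1.2 x (lt_abs.2 (Or.inr hx))

lemma invStat_of_le {N : ℕ} (hσ : isS n σ) (h : n ≤ N) : invStat N σ = invStat n σ := by
  have bound : ∀ x y : ℤ, 1 ≤ x → x < y → σ y < σ x → y ≤ n := fun x y hx hxy hσyx => by
    by_contra! hy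
    rw [hσ.apply_of_lt hy] at hσyx
    rcases le_or_gt x n with hxn | hxn
    · have := ((hσ.apply_mem_Icc_iff x).2 ⟨hx, hxn⟩).2
      omega
    · rw [hσ.apply_of_lt hxn] at hσyx
      omega
  unfold invStat
  congr 1
  ext ⟨x, y⟩
  simp only [Finset.mem_filter, Finset.mem_product, Finset.mem_Icc]
  constructor
  · rintro ⟨⟨⟨hx, -⟩, hy, -⟩, hxy, hσyx⟩
    have hyn := bound x y hx hxy hσyx
    exact ⟨⟨⟨hx, by omega⟩, hy, hyn⟩, hxy, hσyx⟩
  · rintro ⟨⟨⟨hx, -⟩, hy, hyn⟩, hxy, hσyx⟩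
    exact ⟨⟨⟨hx, by omega⟩, hy, by omega⟩, hxy, hσyx⟩

lemma altSubgroup_mono {N : ℕ} (h : n ≤ N) : altSubgroup n ≤ altSubgroup N := fun σ hσ => by
  obtain ⟨hS, heven⟩ := mem_altSubgroup.1 hσ
  exact mem_altSubgroup.2 ⟨hS.mono h, invStat_of_le hS h ▸ heven⟩

lemma mem_altSubgroup_of_apply_succ (hσ : σ ∈ altSubgroup (n + 1)) (h : σ (n + 1) = n + 1) :
    σ ∈ altSubgroup n := by
  obtain ⟨hS, heven⟩ := mem_altSubgroup.1 hσ
  have hS' := hS.of_apply_succ h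
  exact mem_altSubgroup.2 ⟨hS', invStat_of_le hS' (Nat.le_succ n) ▸ heven⟩

end AlternatingGroup

section Generators

variable {n i j k : ℕ}

lemma s_apply (hk : 1 ≤ k) (x : ℤ) :
    s k x = if x = k then (k : ℤ) + 1 else if x = (k : ℤ) + 1 then k
      else if x = -(k : ℤ) then -((k : ℤ) + 1) else if x = -((k : ℤ) + 1) then -(k : ℤ) else x := by
  simp only [s, if_neg (by omega : k ≠ 0), Perm.mul_apply, swap_apply_def]
  split_ifs <;> omega

lemma isS_s (hk : 1 ≤ k) (hn : k + 1 ≤ n) : isS n (s k) := by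
  refine ⟨⟨fun x => ?_, fun x hx => ?_⟩, fun x hx => ?_⟩ <;>
    simp only [s_apply hk, lt_abs] at * <;> split_ifs <;> omega

lemma window_s (hk : 1 ≤ k) (hn : k + 1 ≤ n) :
    window n ⟨s k, isS_s hk hn⟩ = swap ⟨k - 1, by omega⟩ ⟨k, by omega⟩ := by
  ext x
  have := window_apply ⟨s k, isS_s hk hn⟩ x
  rw [s_apply hk] at this
  rw [swap_apply_def]
  split_ifs at this ⊢ <;> simp_all [Fin.ext_iff] <;> omega

lemma a_mem_altSubgroup (hi : 1 ≤ i) (hn : i + 2 ≤ n) : a i ∈ altSubgroup n := by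
  refine Subgroup.mem_map.2
    ⟨⟨s 1, isS_s le_rfl (by omega)⟩ * ⟨s (i + 1), isS_s (by omega) (by omega)⟩, ?_, ?_⟩
  · rw [MonoidHom.mem_ker, MonoidHom.comp_apply, map_mul, window_s le_rfl (by omega),
      window_s (by omega) (by omega), map_mul,
      Perm.sign_swap (by simp), Perm.sign_swap (by simp [Fin.ext_iff])]
    rfl
  · rw [a, if_neg (by omega)]
    rfl

lemma a_apply_succ (hi : 1 ≤ i) : a i ((i : ℤ) + 1) = i + 2 := by
  rw [a, if_neg (by omega), Perm.mul_apply, s_apply (k := i + 1) (by omega),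
    s_apply le_rfl]
  push_cast
  split_ifs <;> omega

lemma a_one_inv_apply_one : (a 1)⁻¹ 1 = 3 := by
  rw [Perm.inv_eq_iff_eq, a, if_neg one_ne_zero, Perm.mul_apply,
    s_apply (k := 2) (by omega), s_apply le_rfl]
  norm_num

lemma rA_zero (j : ℕ) : rA j 0 = 1 := by
  simp [rA]

lemma rA_succ (h : k < j) : rA j (k + 1) = rA j k * a (j - k) := by
  simp [rA, if_pos h, if_pos h.le, List.range_succ]

lemma rA_top (hj : 1 ≤ j) : rA j (j + 1) = rA j (j - 1) * (a 1)⁻¹ := by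
  rw [rA, rA, if_neg (by omega), if_pos (by omega)]

lemma rA_mem_altSubgroup (hj : 1 ≤ j) (hk : k ≤ j + 1) : rA j k ∈ altSubgroup (j + 2) := by
  have hprod (l : ℕ) (hl : l ≤ j) :
      ((List.range l).map fun t => a (j - t)).prod ∈ altSubgroup (j + 2) :=
    Subgroup.list_prod_mem _ <| List.forall_mem_map.2 fun t ht =>
      a_mem_altSubgroup (by have := List.mem_range.1 ht; omega) (by omega)
  unfold rA
  split_ifs with h
  · exact hprod k h
  · exact mul_mem (hprod _ (by omega)) (inv_mem (a_mem_altSubgroup le_rfl (by omega)))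

lemma rA_apply_of_le (hk : k ≤ j) : rA j k ((j : ℤ) + 2 - k) = j + 2 := by
  induction k with
  | zero => simp [rA_zero]
  | succ k ih =>
    have hcast : ((j - k : ℕ) : ℤ) = j - k := by omega
    rw [rA_succ (by omega), Perm.mul_apply,
      show (j : ℤ) + 2 - (k + 1 : ℕ) = ((j - k : ℕ) : ℤ) + 1 by omega,
      a_apply_succ (by omega), hcast, ← ih (by omega)]
    ring_nf

lemma rA_apply (hj : 1 ≤ j) (hk : k ≤ j + 1) : rA j k ((j : ℤ) + 2 - k) = j + 2 := by
  rcases hk.lt_or_eq with hk | rfl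
  · exact rA_apply_of_le (by omega)
  · rw [rA_top hj, Perm.mul_apply, show (j : ℤ) + 2 - (j + 1 : ℕ) = 1 by omega,
      a_one_inv_apply_one, ← rA_apply_of_le (j := j) (k := j - 1) (by omega)]
    congr 1
    omega

end Generators

lemma RA_subset_altSubgroup {j : ℕ} (hj : 1 ≤ j) : RA j ⊆ altSubgroup (j + 2) := by
  rintro _ ⟨k, hk, rfl⟩
  exact rA_mem_altSubgroup hj hk

lemma ofFn_prod_mem_altSubgroup {m : ℕ} {f : Fin m → Perm ℤ}
    (hf : ∀ i : Fin m, f i ∈ RA (i.1 + 1)) : (List.ofFn f).prod ∈ altSubgroup (m + 2) :=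
  Subgroup.list_prod_mem _ fun σ hσ => by
    obtain ⟨i, rfl⟩ := List.mem_ofFn.1 hσ
    exact altSubgroup_mono (by omega) (RA_subset_altSubgroup (by omega) (hf i))

lemma existsUnique_RA_mul_inv_mem_altSubgroup {j : ℕ} (hj : 1 ≤ j) {v : Perm ℤ}
    (hv : v ∈ altSubgroup (j + 2)) : ∃! r, r ∈ RA j ∧ v * r⁻¹ ∈ altSubgroup (j + 1) := by
  have hfix {r : Perm ℤ} : (v * r⁻¹) ((j + 1 : ℕ) + 1) = (j + 1 : ℕ) + 1 ↔
      r⁻¹ ((j : ℤ) + 2) = v⁻¹ ((j : ℤ) + 2) := by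
    rw [Perm.mul_apply, Perm.eq_inv_iff_eq]
    push_cast
    ring_nf
  have hrA {k : ℕ} (hk : k ≤ j + 1) : (rA j k)⁻¹ ((j : ℤ) + 2) = j + 2 - k :=
    Perm.inv_eq_iff_eq.2 (rA_apply hj hk).symm
  obtain ⟨hpos, hle⟩ := ((mem_altSubgroup.1 (inv_mem hv)).1.apply_mem_Icc_iff ((j : ℤ) + 2)).2
    ⟨by omega, by push_cast; omega⟩
  set k := ((j : ℤ) + 2 - v⁻¹ ((j : ℤ) + 2)).toNat
  have hk : k ≤ j + 1 := by push_cast at hle; omega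
  refine ⟨rA j k, ⟨⟨k, hk, rfl⟩, ?_⟩, ?_⟩
  · refine mem_altSubgroup_of_apply_succ
      (mul_mem (altSubgroup_mono (by omega) hv) (inv_mem (rA_mem_altSubgroup hj hk))) ?_
    rw [hfix, hrA hk]
    omega
  · rintro _ ⟨⟨k', hk', rfl⟩, hw⟩
    have := hfix.1 ((mem_altSubgroup.1 hw).1.apply_of_lt (by omega))
    rw [hrA hk'] at this
    congr 1
    omega

theorem existsUnique_RA_presentation (m : ℕ) {v : Perm ℤ} (hv : v ∈ altSubgroup (m + 2)) :
    ∃! f : Fin m → Perm ℤ, (∀ i : Fin m, f i ∈ RA (i.1 + 1)) ∧ (List.ofFn f).prod = v := by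
  induction m generalizing v with
  | zero =>
    rw [altSubgroup_two, Subgroup.mem_bot] at hv
    exact ⟨finZeroElim, ⟨finZeroElim, by simp [hv]⟩, fun _ _ => funext finZeroElim⟩
  | succ m ih =>
    obtain ⟨r, ⟨hr, hw⟩, hr_unique⟩ := existsUnique_RA_mul_inv_mem_altSubgroup (by omega) hv
    obtain ⟨g, ⟨hg, hg_prod⟩, hg_unique⟩ := ih hw
    have prod_snoc (f : Fin (m + 1) → Perm ℤ) :
        (List.ofFn f).prod = (List.ofFn (Fin.init f)).prod * f (Fin.last m) := by
      rw [List.ofFn_succ', List.prod_concat]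
      rfl
    refine ⟨Fin.snoc g r, ⟨fun i => ?_, ?_⟩, ?_⟩
    · induction i using Fin.lastCases with
      | last => simpa using hr
      | cast i => simpa using hg i
    · rw [prod_snoc, Fin.init_snoc, Fin.snoc_last, hg_prod, inv_mul_cancel_right]
    · rintro f ⟨hf, hf_prod⟩
      rw [prod_snoc] at hf_prod
      have hlast : f (Fin.last m) = r := hr_unique _ ⟨by simpa using hf (Fin.last m), by
        rw [← hf_prod, mul_inv_cancel_right]
        exact ofFn_prod_mem_altSubgroup fun i => hf i.castSucc⟩
      have hinit : Fin.init f = g := hg_unique _ ⟨fun i => hf i.castSucc, by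
        rw [← hf_prod, hlast, mul_inv_cancel_right]⟩
      rw [← Fin.snoc_init_self f, hinit, hlast]

/-- Every `v ∈ A_{n+1}` has a unique presentation `v = v₁ ⋯ v_{n-1}`
with `v_j ∈ R_j^A`. -/
theorem aCanonicalPresentation (n : ℕ) (v : Equiv.Perm ℤ) (hv : isA (n + 1) v) :
    ∃! f : Fin (n - 1) → Equiv.Perm ℤ,
      (∀ j : Fin (n - 1), f j ∈ RA (j.1 + 1)) ∧ (List.ofFn f).prod = v :=
  existsUnique_RA_presentation (n - 1) (altSubgroup_mono (by omega) (mem_altSubgroup.2 hv))
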